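/- arXiv:2605.02611 — 3 statements merged into one kernel-verified Lean document; each statement's English description precedes it below -/
import Mathlib

section
/- Every logit maximizer of any Lipschitz-consistent head at pool point u lies in the certified feasible label set Γ(u) := {c : UB_c(u) ≥ 0}. In particular, if Γ(u) is a singleton {c⋆}, then every head in F(S) predicts c⋆ at u. -/
/-!
A logit maximizer `c` at `zu` has nonnegative margin there. At a center `z i` with label
`y i ≠ c`, the margins of `c` and `y i` sum to at most `0`, so the margin of `c` is at most
`-mlb i`. The Lipschitz bound on the margin of `c` between `zu` and `z i` then gives
`0 ≤ -mlb i + L c * ‖zu - z i‖`, which is every term of the infimum `UB_c(u)`.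
-/

open Finset

/-- One-vs-rest margin `M_c(z) = f_c(z) - max_{k ≠ c} f_k(z)` of a logit vector. -/
noncomputable def margin {C : ℕ} (hC : 2 ≤ C) (f : Fin C → ℝ) (c : Fin C) : ℝ :=
  f c - (Finset.univ.erase c).sup'
    (by
      rw [← Finset.card_pos, Finset.card_erase_of_mem (Finset.mem_univ c),
        Finset.card_univ, Fintype.card_fin]
      omega) f

/-- Upper envelope `UB_c(u)` in `EReal` (so `inf ∅ = +∞`). -/
noncomputable def UB {m C : ℕ} {ι : Type*} (S : Finset ι)
    (z : ι → EuclideanSpace ℝ (Fin m)) (y : ι → Fin C) (mlb : ι → ℝ)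
    (L : Fin C → ℝ) (zu : EuclideanSpace ℝ (Fin m)) (c : Fin C) : EReal :=
  (S.filter fun i => y i ≠ c).inf fun i => ((-mlb i + L c * ‖zu - z i‖ : ℝ) : EReal)

section Margin

variable {C : ℕ} (hC : 2 ≤ C) {f : Fin C → ℝ}

theorem margin_nonneg_of_forall_le {c : Fin C} (hmax : ∀ k, f k ≤ f c) :
    0 ≤ margin hC f c := by
  unfold margin
  exact sub_nonneg.2 (sup'_le _ _ fun k _ => hmax k)

theorem margin_add_margin_nonpos {c d : Fin C} (hcd : c ≠ d) :
    margin hC f c + margin hC f d ≤ 0 := by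
  unfold margin
  have hd : f d ≤ (univ.erase c).sup' _ f := le_sup' f (mem_erase.2 ⟨hcd.symm, mem_univ d⟩)
  have hc : f c ≤ (univ.erase d).sup' _ f := le_sup' f (mem_erase.2 ⟨hcd, mem_univ c⟩)
  linarith

end Margin

theorem zero_le_UB_iff {m C : ℕ} {ι : Type*} (S : Finset ι)
    (z : ι → EuclideanSpace ℝ (Fin m)) (y : ι → Fin C) (mlb : ι → ℝ)
    (L : Fin C → ℝ) (zu : EuclideanSpace ℝ (Fin m)) (c : Fin C) :
    0 ≤ UB S z y mlb L zu c ↔ ∀ i ∈ S, y i ≠ c → mlb i ≤ L c * ‖zu - z i‖ := by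
  simp only [UB, Finset.le_inf_iff, mem_filter, and_imp, EReal.coe_nonneg, le_neg_add_iff_add_le,
    add_zero]

theorem zero_le_UB_of_forall_le {m C : ℕ} (hC : 2 ≤ C) {ι : Type*} (S : Finset ι)
    (z : ι → EuclideanSpace ℝ (Fin m)) (y : ι → Fin C) (mlb : ι → ℝ) (L : Fin C → ℝ)
    (f : EuclideanSpace ℝ (Fin m) → Fin C → ℝ)
    (hLip : ∀ c z₁ z₂, |margin hC (f z₁) c - margin hC (f z₂) c| ≤ L c * ‖z₁ - z₂‖)
    (hCenter : ∀ i ∈ S, mlb i ≤ margin hC (f (z i)) (y i))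
    {zu : EuclideanSpace ℝ (Fin m)} {c : Fin C} (hmax : ∀ k, f zu k ≤ f zu c) :
    0 ≤ UB S z y mlb L zu c := by
  refine (zero_le_UB_iff S z y mlb L zu c).2 fun i hi hyc => ?_
  have hu := margin_nonneg_of_forall_le hC hmax
  have hzi := margin_add_margin_nonpos hC (f := f (z i)) hyc
  have hlip := (le_abs_self _).trans (hLip c zu (z i))
  linarith [hCenter i hi]

theorem predicted_label_in_feasible_set_general
    {m C : ℕ} (hC : 2 ≤ C) {ι : Type*}
    (S : Finset ι)
    (z : ι → EuclideanSpace ℝ (Fin m))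
    (y : ι → Fin C)
    (mlb : ι → ℝ)
    (L : Fin C → ℝ)
    (f : EuclideanSpace ℝ (Fin m) → Fin C → ℝ)
    (hLip : ∀ c z₁ z₂, |margin hC (f z₁) c - margin hC (f z₂) c| ≤ L c * ‖z₁ - z₂‖)
    (hCenter : ∀ i ∈ S, mlb i ≤ margin hC (f (z i)) (y i))
    (zu : EuclideanSpace ℝ (Fin m)) :
    (∀ c, (∀ k, f zu k ≤ f zu c) → 0 ≤ UB S z y mlb L zu c) ∧
    (∀ cstar : Fin C,
      ({c | 0 ≤ UB S z y mlb L zu c} = {cstar}) →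
      ∀ c, (∀ k, f zu k ≤ f zu c) → c = cstar) := by
  have feasible c (hmax : ∀ k, f zu k ≤ f zu c) : 0 ≤ UB S z y mlb L zu c :=
    zero_le_UB_of_forall_le hC S z y mlb L f hLip hCenter hmax
  refine ⟨feasible, fun cstar hΓ c hmax => ?_⟩
  have hc : c ∈ {c | 0 ≤ UB S z y mlb L zu c} := feasible c hmax
  rwa [hΓ] at hc

/-- Every logit maximizer of a Lipschitz-consistent head at `zu` lies in the
certified feasible set `Γ(u) = {c : UB_c(u) ≥ 0}`; in particular, if
`Γ(u) = {c⋆}` then every consistent head predicts `c⋆` at `zu`. -/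
theorem predicted_label_in_feasible_set
    {m C : ℕ} (hC : 2 ≤ C) {ι : Type*} [Fintype ι]
    (S : Finset ι)
    (z : ι → EuclideanSpace ℝ (Fin m))
    (y : ι → Fin C)
    (mlb : ι → ℝ) (hmlb : ∀ i, 0 ≤ mlb i)
    (L : Fin C → ℝ)
    (f : EuclideanSpace ℝ (Fin m) → Fin C → ℝ)
    (hLip : ∀ c z₁ z₂, |margin hC (f z₁) c - margin hC (f z₂) c| ≤ L c * ‖z₁ - z₂‖)
    (hCenter : ∀ i ∈ S, mlb i ≤ margin hC (f (z i)) (y i))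
    (zu : EuclideanSpace ℝ (Fin m)) :
    (∀ c, (∀ k, f zu k ≤ f zu c) → 0 ≤ UB S z y mlb L zu c) ∧
    (∀ cstar : Fin C,
      ({c | 0 ≤ UB S z y mlb L zu c} = {cstar}) →
      ∀ c, (∀ k, f zu k ≤ f zu c) → c = cstar) :=
  predicted_label_in_feasible_set_general hC S z y mlb L f hLip hCenter zu
end

section
/- Soundness of gap forcing: fix τ ≥ 0 and κ ≥ 0. If at pool point u there exists a class c⋆ with LB_{c⋆}(u) ≥ κ and LB_{c⋆}(u) > max_{c ≠ c⋆} UB_c(u) + τ, then c⋆ is the unique logit maximizer at z_u for every head f̃ ∈ F(S). -/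
/-!
Lipschitz continuity carried over from the labeled centers pins every margin at `zu` between the
envelopes, `LB_c ≤ M_c(zu) ≤ UB_c`; the upper bound holds because at a center labeled `y_i ≠ c`
one has `M_c ≤ -M_{y_i} ≤ -m̲_i`. The gap then makes `M_{c⋆}(zu)` exceed every other margin, and a
class whose margin strictly dominates all others is the strict maximizer, since any maximizer has
nonnegative margin.
-/

open Finset

/-- Lower envelope `LB_c(u)` in `EReal` (so `sup ∅ = -∞`). -/
noncomputable def LB {m C : ℕ} {ι : Type*} (S : Finset ι)
    (z : ι → EuclideanSpace ℝ (Fin m)) (y : ι → Fin C) (mlb : ι → ℝ)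
    (L : Fin C → ℝ) (zu : EuclideanSpace ℝ (Fin m)) (c : Fin C) : EReal :=
  (S.filter fun i => y i = c).sup fun i => ((mlb i - L c * ‖zu - z i‖ : ℝ) : EReal)

section margin

variable {C : ℕ} (hC : 2 ≤ C) (g : Fin C → ℝ)

theorem margin_le_sub {c k : Fin C} (hk : k ≠ c) : margin hC g c ≤ g c - g k := by
  unfold margin
  linarith [Finset.le_sup' g (Finset.mem_erase.mpr ⟨hk, Finset.mem_univ k⟩)]

theorem margin_nonneg_of_forall_le_s5 {j : Fin C} (hj : ∀ i, g i ≤ g j) : 0 ≤ margin hC g j := by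
  unfold margin
  exact sub_nonneg.mpr (Finset.sup'_le _ g fun i _ => hj i)

theorem margin_le_neg_margin {c k : Fin C} (hk : k ≠ c) : margin hC g k ≤ -margin hC g c := by
  linarith [margin_le_sub hC g hk, margin_le_sub hC g hk.symm]

theorem lt_of_forall_margin_lt {c : Fin C} (h : ∀ k ≠ c, margin hC g k < margin hC g c) :
    ∀ k ≠ c, g k < g c := by
  intro k hk
  by_contra! hck
  -- the runner-up `j` is then a global maximizer, so its margin is nonnegative while `c`'s is not
  have hk_mem : k ∈ Finset.univ.erase c := Finset.mem_erase.mpr ⟨hk, Finset.mem_univ k⟩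
  obtain ⟨j, hj, hj_sup⟩ := Finset.exists_mem_eq_sup' ⟨k, hk_mem⟩ g
  have hjc : j ≠ c := Finset.ne_of_mem_erase hj
  have hk_le_j : g k ≤ g j := hj_sup ▸ Finset.le_sup' g hk_mem
  have hj_max : ∀ i, g i ≤ g j := by
    intro i
    rcases eq_or_ne i c with rfl | hic
    · exact hck.trans hk_le_j
    · exact hj_sup ▸ Finset.le_sup' g (Finset.mem_erase.mpr ⟨hic, Finset.mem_univ i⟩)
  linarith [h j hjc, margin_nonneg_of_forall_le_s5 hC g hj_max, margin_le_sub hC g hjc]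

end margin

section envelope

variable {m C : ℕ} (hC : 2 ≤ C) {ι : Type*} {S : Finset ι} {z : ι → EuclideanSpace ℝ (Fin m)}
  {y : ι → Fin C} {mlb : ι → ℝ} {L : Fin C → ℝ} {f : EuclideanSpace ℝ (Fin m) → Fin C → ℝ}
  (hCenter : ∀ i ∈ S, mlb i ≤ margin hC (f (z i)) (y i)) (zu : EuclideanSpace ℝ (Fin m))
include hCenter

theorem LB_le_margin {c : Fin C}
    (hLip : ∀ z₁ z₂, |margin hC (f z₁) c - margin hC (f z₂) c| ≤ L c * ‖z₁ - z₂‖) :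
    LB S z y mlb L zu c ≤ (margin hC (f zu) c : EReal) := by
  refine Finset.sup_le fun i hi => EReal.coe_le_coe_iff.mpr ?_
  obtain ⟨hiS, rfl⟩ := Finset.mem_filter.mp hi
  have hlip := (abs_le.mp (hLip (z i) zu)).2
  rw [norm_sub_rev] at hlip
  linarith [hCenter i hiS]

theorem margin_le_UB {c : Fin C}
    (hLip : ∀ z₁ z₂, |margin hC (f z₁) c - margin hC (f z₂) c| ≤ L c * ‖z₁ - z₂‖) :
    (margin hC (f zu) c : EReal) ≤ UB S z y mlb L zu c := by
  refine Finset.le_inf fun i hi => EReal.coe_le_coe_iff.mpr ?_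
  obtain ⟨hiS, hic⟩ := Finset.mem_filter.mp hi
  linarith [hCenter i hiS, margin_le_neg_margin hC (f (z i)) (Ne.symm hic),
    (abs_le.mp (hLip zu (z i))).2]

end envelope

theorem gap_forcing_sound_general
    {m C : ℕ} (hC : 2 ≤ C) {ι : Type*}
    (S : Finset ι)
    (z : ι → EuclideanSpace ℝ (Fin m))
    (y : ι → Fin C)
    (mlb : ι → ℝ)
    (L : Fin C → ℝ)
    (f : EuclideanSpace ℝ (Fin m) → Fin C → ℝ)
    (hLip : ∀ c z₁ z₂, |margin hC (f z₁) c - margin hC (f z₂) c| ≤ L c * ‖z₁ - z₂‖)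
    (hCenter : ∀ i ∈ S, mlb i ≤ margin hC (f (z i)) (y i))
    (zu : EuclideanSpace ℝ (Fin m))
    (τ : ℝ) (hτ : 0 ≤ τ)
    (cstar : Fin C)
    (hGap : ((Finset.univ.erase cstar).sup fun c => UB S z y mlb L zu c) + (τ : EReal)
        < LB S z y mlb L zu cstar) :
    ∀ k ≠ cstar, f zu k < f zu cstar := by
  refine lt_of_forall_margin_lt hC (f zu) fun k hk => ?_
  have hUB_le_sup :
      UB S z y mlb L zu k ≤ (Finset.univ.erase cstar).sup fun c => UB S z y mlb L zu c :=
    Finset.le_sup (Finset.mem_erase.mpr ⟨hk, Finset.mem_univ k⟩)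
  have hgap : ((margin hC (f zu) k + τ : ℝ) : EReal) < margin hC (f zu) cstar :=
    calc ((margin hC (f zu) k + τ : ℝ) : EReal)
        = (margin hC (f zu) k : EReal) + τ := EReal.coe_add _ _
      _ ≤ ((Finset.univ.erase cstar).sup fun c => UB S z y mlb L zu c) + τ := by
        gcongr
        exact (margin_le_UB hC hCenter zu (hLip k)).trans hUB_le_sup
      _ < LB S z y mlb L zu cstar := hGap
      _ ≤ margin hC (f zu) cstar := LB_le_margin hC hCenter zu (hLip cstar)
  linarith [EReal.coe_lt_coe_iff.mp hgap]

/-- Soundness of gap forcing: if `LB_{c⋆}(u) ≥ κ` and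
`LB_{c⋆}(u) > max_{c ≠ c⋆} UB_c(u) + τ`, then `c⋆` is the unique logit maximizer
at `zu` for every Lipschitz-consistent head. -/
theorem gap_forcing_sound
    {m C : ℕ} (hC : 2 ≤ C) {ι : Type*} [Fintype ι]
    (S : Finset ι)
    (z : ι → EuclideanSpace ℝ (Fin m))
    (y : ι → Fin C)
    (mlb : ι → ℝ) (hmlb : ∀ i, 0 ≤ mlb i)
    (L : Fin C → ℝ)
    (f : EuclideanSpace ℝ (Fin m) → Fin C → ℝ)
    (hLip : ∀ c z₁ z₂, |margin hC (f z₁) c - margin hC (f z₂) c| ≤ L c * ‖z₁ - z₂‖)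
    (hCenter : ∀ i ∈ S, mlb i ≤ margin hC (f (z i)) (y i))
    (zu : EuclideanSpace ℝ (Fin m))
    (τ κ : ℝ) (hτ : 0 ≤ τ) (hκ : 0 ≤ κ)
    (cstar : Fin C)
    (hLB : (κ : EReal) ≤ LB S z y mlb L zu cstar)
    (hGap : ((Finset.univ.erase cstar).sup fun c => UB S z y mlb L zu c) + (τ : EReal)
        < LB S z y mlb L zu cstar) :
    ∀ k ≠ cstar, f zu k < f zu cstar :=
  gap_forcing_sound_general hC S z y mlb L f hLip hCenter zu τ hτ cstar hGap
end

section
/- Greedy (1 − 1/e) guarantee for coverage: let F(S) := |⋃_{i∈S} B_i| for finite sets B_i ⊆ U (U finite), let S_k be the set built by k steps of greedy selection (at each step adding an element maximizing the marginal gain of F), and let S⋆ be any set of size k. Then F(S_k) ≥ (1 − (1 − 1/k)^k) · F(S⋆) ≥ (1 − 1/e) · F(S⋆). -/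
open Finset

/-- Coverage function: size of the union of the sets `B i` for `i ∈ S`. -/
def cover {ι U : Type*} [DecidableEq U] (B : ι → Finset U) (S : Finset ι) : ℕ :=
  (S.sup B).card

/-!
Coverage is submodular: adding the elements of any `S⋆` to `T` gains at most the sum of their
individual marginal gains at `T`. If `#S⋆ = k` and `x` is the greedy choice at `T`, its gain is
therefore at least `(F(S⋆) - F(T)) / k`, so the gap `F(S⋆) - F(S_t)` shrinks by a factor
`1 - 1/k` at every step. After `k` steps it is at most `(1 - 1/k)^k F(S⋆) ≤ F(S⋆) / e`.
-/

section Coverage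

variable {ι U : Type*} [DecidableEq U] (B : ι → Finset U)

lemma cover_insert [DecidableEq ι] (T : Finset ι) (y : ι) :
    cover B (insert y T) = cover B T + #(B y \ T.sup B) := by
  rw [cover, cover, sup_insert, sup_eq_union, ← card_sdiff_add_card, add_comm]

lemma cover_le_cover_add_sum_card_sdiff (T S : Finset ι) :
    cover B S ≤ cover B T + ∑ y ∈ S, #(B y \ T.sup B) := by
  have hsub : S.sup B ⊆ T.sup B ∪ S.biUnion (fun y => B y \ T.sup B) := by
    intro a ha
    obtain ⟨y, hy, hay⟩ := mem_sup.mp ha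
    by_cases haT : a ∈ T.sup B
    · exact mem_union_left _ haT
    · exact mem_union_right _ (mem_biUnion.mpr ⟨y, hy, mem_sdiff.mpr ⟨hay, haT⟩⟩)
  calc cover B S ≤ #(T.sup B ∪ S.biUnion (fun y => B y \ T.sup B)) := card_le_card hsub
    _ ≤ cover B T + #(S.biUnion (fun y => B y \ T.sup B)) := card_union_le _ _
    _ ≤ cover B T + ∑ y ∈ S, #(B y \ T.sup B) := by gcongr; exact card_biUnion_le

lemma cover_le_cover_add_card_mul_of_greedy [DecidableEq ι] {T : Finset ι} {x : ι}
    (hx : ∀ y, cover B (insert y T) ≤ cover B (insert x T)) (S : Finset ι) :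
    cover B S ≤ cover B T + #S * #(B x \ T.sup B) := by
  have hgain : ∀ y ∈ S, #(B y \ T.sup B) ≤ #(B x \ T.sup B) := fun y _ => by
    simpa only [cover_insert, add_le_add_iff_left] using hx y
  calc cover B S ≤ cover B T + ∑ y ∈ S, #(B y \ T.sup B) :=
        cover_le_cover_add_sum_card_sdiff B T S
    _ ≤ cover B T + #S * #(B x \ T.sup B) := by
        gcongr
        simpa only [smul_eq_mul] using sum_le_card_nsmul S _ _ hgain

end Coverage

lemma sub_le_one_sub_one_div_pow_mul_sub {a : ℕ → ℝ} {c r : ℝ} (hr : 1 ≤ r) {n : ℕ}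
    (h : ∀ t < n, c ≤ a t + r * (a (t + 1) - a t)) :
    c - a n ≤ (1 - 1 / r) ^ n * (c - a 0) := by
  induction n with
  | zero => simp
  | succ n ih =>
    have hr0 : 0 < r := by linarith
    have hfactor : 0 ≤ 1 - 1 / r := sub_nonneg.mpr ((div_le_one hr0).mpr hr)
    have hstep : (c - a n) / r ≤ a (n + 1) - a n := by
      rw [div_le_iff₀ hr0]
      linarith [h n n.lt_succ_self]
    calc c - a (n + 1) = (c - a n) - (a (n + 1) - a n) := by ring
      _ ≤ (c - a n) - (c - a n) / r := by linarith
      _ = (1 - 1 / r) * (c - a n) := by ring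
      _ ≤ (1 - 1 / r) * ((1 - 1 / r) ^ n * (c - a 0)) :=
        mul_le_mul_of_nonneg_left (ih fun t ht => h t (ht.trans n.lt_succ_self)) hfactor
      _ = (1 - 1 / r) ^ (n + 1) * (c - a 0) := by ring

theorem greedy_coverage_guarantee_general
    {ι U : Type*} [DecidableEq ι] [DecidableEq U]
    (B : ι → Finset U)
    (k : ℕ) (hk : 0 < k)
    (S : ℕ → Finset ι)
    (hS0 : S 0 = ∅)
    (hgreedy : ∀ t < k, ∃ x : ι,
        S (t + 1) = insert x (S t) ∧
        ∀ y : ι, cover B (insert y (S t)) ≤ cover B (insert x (S t)))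
    (Sstar : Finset ι) (hcard : Sstar.card = k) :
    (1 - (1 - 1 / (k : ℝ)) ^ k) * (cover B Sstar : ℝ) ≤ (cover B (S k) : ℝ) ∧
    (1 - 1 / Real.exp 1) * (cover B Sstar : ℝ) ≤ (cover B (S k) : ℝ) := by
  have hstep : ∀ t < k, (cover B Sstar : ℝ) ≤
      cover B (S t) + k * ((cover B (S (t + 1)) : ℝ) - cover B (S t)) := by
    intro t ht
    obtain ⟨x, hSx, hx⟩ := hgreedy t ht
    have hle : (cover B Sstar : ℝ) ≤ cover B (S t) + #Sstar * #(B x \ (S t).sup B) := by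
      exact_mod_cast cover_le_cover_add_card_mul_of_greedy B hx Sstar
    rw [hSx, cover_insert, ← hcard]
    push_cast
    linarith
  have hgap := sub_le_one_sub_one_div_pow_mul_sub (by exact_mod_cast hk) hstep
  have hcover0 : cover B (S 0) = 0 := by rw [hS0]; rfl
  have hpow : (1 - 1 / (k : ℝ)) ^ k ≤ 1 / Real.exp 1 := by
    simpa only [Real.exp_neg, one_div] using
      Real.one_sub_div_pow_le_exp_neg (n := k) (t := 1) (by exact_mod_cast hk)
  have hc : (0 : ℝ) ≤ cover B Sstar := Nat.cast_nonneg _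
  rw [hcover0, Nat.cast_zero, sub_zero] at hgap
  constructor <;> nlinarith

/-- Greedy `(1 - 1/e)` guarantee for set coverage: if `S t` is the chain of sets
built by greedy marginal-gain selection (starting from `∅`, adding at each of
`k` steps an element whose marginal coverage gain is maximal), then the greedy
set after `k` steps covers at least `(1 - (1 - 1/k)^k) ≥ (1 - 1/e)` times the
coverage of any size-`k` set. -/
theorem greedy_coverage_guarantee
    {ι U : Type*} [Fintype ι] [DecidableEq ι] [Fintype U] [DecidableEq U]
    (B : ι → Finset U)
    (k : ℕ) (hk : 0 < k)
    (S : ℕ → Finset ι)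
    (hS0 : S 0 = ∅)
    (hgreedy : ∀ t < k, ∃ x : ι,
        S (t + 1) = insert x (S t) ∧
        ∀ y : ι, cover B (insert y (S t)) ≤ cover B (insert x (S t)))
    (Sstar : Finset ι) (hcard : Sstar.card = k) :
    (1 - (1 - 1 / (k : ℝ)) ^ k) * (cover B Sstar : ℝ) ≤ (cover B (S k) : ℝ) ∧
    (1 - 1 / Real.exp 1) * (cover B Sstar : ℝ) ≤ (cover B (S k) : ℝ) :=
  greedy_coverage_guarantee_general B k hk S hS0 hgreedy Sstar hcard
end
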